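/- arXiv:2110.04947 — 2 statements merged into one kernel-verified Lean document; each statement's English description precedes it below -/
import Mathlib

section
/- Let d ≥ 1, let S be a linear subspace of ℝ^d with orthogonal projection matrix P_S, and let P_B = I_d − P_S be the projection onto its orthogonal complement B. Let α > 0, σ² > 0, η ∈ (1/(4(1+σ²)), 1/4), and δ > ((1−√(1−4η))/2)^{1/(2α)}. Suppose λ_S, λ_B : [0,∞) → ℝ are differentiable with λ_S(0) = λ_B(0) = δ and satisfy λ_S'(t) = λ_S(t)(−|λ_S(t)|^{4α} + |λ_S(t)|^{2α} − η) and λ_B'(t) = λ_B(t)(−(1+σ²)|λ_B(t)|^{4α} + |λ_B(t)|^{2α} − η) for all t ≥ 0. Then the matrix trajectory W(t) = λ_S(t)·P_S + λ_B(t)·P_B converges, as t → ∞, to ((1+√(1−4η))/2)^{1/(2α)}·P_S (entrywise, equivalently in spectral norm). -/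
/-!
On `S` put `v = λ_S ^ (2α)`. Then `v' = 2α v (v - w₋) (w₊ - v)`, where
`w± = (1 ± √(1 - 4η)) / 2` are the roots of `w² - w + η`. Since `δ ^ (2α) > w₋`, `λ_S` can
never cross downwards a level `θ` with `w₋ < θ ^ (2α) < w₊`, and once `v` stays above
`θ ^ (2α)` the quantity `(v - w₊)²` decays exponentially by Grönwall's inequality.
On `B` the bracket `-(1 + σ²) w² + w - η` is at most `1 / (4(1 + σ²)) - η < 0`, so `λ_B²`
decays exponentially.
-/

open Filter Matrix Real Topology

theorem le_mul_exp_of_hasDerivAt_le_mul {f f' : ℝ → ℝ} {K : ℝ}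
    (hf : ∀ t, 0 ≤ t → HasDerivAt f (f' t) t) (hbound : ∀ t, 0 ≤ t → f' t ≤ K * f t)
    {t : ℝ} (ht : 0 ≤ t) : f t ≤ f 0 * exp (K * t) := by
  simpa [gronwallBound_ε0] using le_gronwallBound_of_liminf_deriv_right_le (K := K) (ε := 0)
    (fun s hs => (hf s hs.1).continuousAt.continuousWithinAt)
    (fun s hs _ hr => (hf s hs.1).hasDerivWithinAt.liminf_right_slope_le hr) le_rfl
    (fun s hs => by rw [add_zero]; exact hbound s hs.1) t ⟨ht, le_rfl⟩

theorem tendsto_of_hasDerivAt_eq_mul_sub {v r : ℝ → ℝ} {b c : ℝ} (hc : 0 < c)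
    (hv : ∀ t, 0 ≤ t → HasDerivAt v (r t * (b - v t)) t) (hr : ∀ t, 0 ≤ t → c ≤ r t) :
    Tendsto v atTop (𝓝 b) := by
  have hsq : ∀ t, 0 ≤ t → (v t - b) ^ 2 ≤ ((v 0 - b) * exp (-c * t)) ^ 2 := by
    intro t ht
    have hF : ∀ s, 0 ≤ s → HasDerivAt (fun s => (v s - b) ^ 2)
        (2 * (v s - b) * (r s * (b - v s))) s := fun s hs => by
      simpa using ((hv s hs).sub_const b).fun_pow 2
    calc (v t - b) ^ 2 ≤ (v 0 - b) ^ 2 * exp (-(2 * c) * t) :=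
          le_mul_exp_of_hasDerivAt_le_mul hF (fun s hs => by
            nlinarith [mul_nonneg (sub_nonneg.2 (hr s hs)) (sq_nonneg (v s - b))]) ht
      _ = ((v 0 - b) * exp (-c * t)) ^ 2 := by rw [mul_pow, ← exp_nat_mul]; ring_nf
  have hexp : Tendsto (fun t => |v 0 - b| * exp (-c * t)) atTop (𝓝 0) := by
    simpa using (tendsto_exp_neg_atTop_nhds_zero.comp
      (tendsto_id.const_mul_atTop hc)).const_mul |v 0 - b|
  rw [tendsto_iff_norm_sub_tendsto_zero]
  refine squeeze_zero' (Eventually.of_forall fun t => norm_nonneg _) ?_ hexp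
  filter_upwards [eventually_ge_atTop 0] with t ht
  simpa [abs_mul] using sq_le_sq.mp (hsq t ht)

theorem le_of_deriv_pos_of_eq {f : ℝ → ℝ} {θ : ℝ} (hf : Differentiable ℝ f) (h0 : θ ≤ f 0)
    (hθ : ∀ t, 0 ≤ t → f t = θ → 0 < deriv f t) {t : ℝ} (ht : 0 ≤ t) : θ ≤ f t :=
  image_le_of_deriv_right_lt_deriv_boundary (f' := fun _ => 0) continuousOn_const
    (fun _ _ => hasDerivWithinAt_const _ _ _) h0 (fun s => (hf s).hasDerivAt)
    (fun s hs h => hθ s hs.1 h.symm) ⟨ht, le_rfl⟩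

theorem HasDerivAt.rpow_const_of_eq_mul {x : ℝ → ℝ} {g t : ℝ} (p : ℝ) (hx : 0 < x t)
    (h : HasDerivAt x (x t * g) t) : HasDerivAt (fun s => x s ^ p) (p * x t ^ p * g) t := by
  convert h.rpow_const (p := p) (Or.inl hx.ne') using 1
  rw [rpow_sub_one hx.ne']
  field_simp

theorem rpow_four_mul_eq_sq {x : ℝ} (hx : 0 ≤ x) (α : ℝ) : x ^ (4 * α) = (x ^ (2 * α)) ^ 2 := by
  rw [show 4 * α = 2 * α * 2 by ring, rpow_mul hx, rpow_two]

theorem neg_mul_sq_add_le {κ : ℝ} (hκ : 0 < κ) (w : ℝ) : -κ * w ^ 2 + w ≤ 1 / (4 * κ) := by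
  have h : 1 / (4 * κ) - (-κ * w ^ 2 + w) = (2 * κ * w - 1) ^ 2 / (4 * κ) := by
    field_simp; ring
  rw [← sub_nonneg, h]
  positivity

/-- Right-hand side of the DirectSet(α) eigenvalue ODE: `κ = 1` on `S`, `κ = 1 + σ²` on `B`. -/
noncomputable def directSetField (κ α η x : ℝ) : ℝ := x * (-κ * |x| ^ (4 * α) + |x| ^ (2 * α) - η)

theorem tendsto_zero_of_deriv_eq_directSetField {κ α η : ℝ} {x : ℝ → ℝ} (hκ : 0 < κ)
    (hη : 1 / (4 * κ) < η) (hx : Differentiable ℝ x)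
    (hode : ∀ t, 0 ≤ t → deriv x t = directSetField κ α η (x t)) :
    Tendsto x atTop (𝓝 0) := by
  refine tendsto_of_hasDerivAt_eq_mul_sub
    (r := fun t => -(-κ * |x t| ^ (4 * α) + |x t| ^ (2 * α) - η)) (sub_pos.2 hη)
    (fun t ht => ?_) (fun t _ => ?_)
  · have hxt := (hx t).hasDerivAt
    rw [hode t ht, directSetField] at hxt
    exact hxt.congr_deriv (by ring)
  · have := neg_mul_sq_add_le hκ (|x t| ^ (2 * α))
    rw [rpow_four_mul_eq_sq (abs_nonneg _)]
    linarith

theorem directSetField_one_eq_mul {α η s x : ℝ} (hs : s ^ 2 = 1 - 4 * η) (hx : 0 < x) :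
    directSetField 1 α η x =
      x * ((x ^ (2 * α) - (1 - s) / 2) * ((1 + s) / 2 - x ^ (2 * α))) := by
  rw [directSetField, abs_of_pos hx, rpow_four_mul_eq_sq hx.le]
  linear_combination (-x / 4) * hs

theorem le_of_deriv_eq_directSetField_one {α η s θ : ℝ} {x : ℝ → ℝ} (hs : s ^ 2 = 1 - 4 * η)
    (hθ : 0 < θ) (hθm : (1 - s) / 2 < θ ^ (2 * α)) (hθp : θ ^ (2 * α) < (1 + s) / 2)
    (hx : Differentiable ℝ x) (hx0 : θ ≤ x 0)
    (hode : ∀ t, 0 ≤ t → deriv x t = directSetField 1 α η (x t)) {t : ℝ} (ht : 0 ≤ t) :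
    θ ≤ x t :=
  le_of_deriv_pos_of_eq hx hx0 (fun t ht hxt => by
    rw [hode t ht, hxt, directSetField_one_eq_mul hs hθ]
    exact mul_pos hθ (mul_pos (sub_pos.2 hθm) (sub_pos.2 hθp))) ht

theorem tendsto_rpow_of_deriv_eq_directSetField_one {α η s w : ℝ} {x : ℝ → ℝ} (hα : 0 < α)
    (hs : s ^ 2 = 1 - 4 * η) (hw0 : 0 < w) (hw : (1 - s) / 2 < w) (hx : Differentiable ℝ x)
    (hpos : ∀ t, 0 ≤ t → 0 < x t) (hlow : ∀ t, 0 ≤ t → w ≤ x t ^ (2 * α))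
    (hode : ∀ t, 0 ≤ t → deriv x t = directSetField 1 α η (x t)) :
    Tendsto (fun t => x t ^ (2 * α)) atTop (𝓝 ((1 + s) / 2)) := by
  have hw' := sub_pos.2 hw
  refine tendsto_of_hasDerivAt_eq_mul_sub
    (r := fun t => 2 * α * x t ^ (2 * α) * (x t ^ (2 * α) - (1 - s) / 2))
    (c := 2 * α * w * (w - (1 - s) / 2)) (by positivity) (fun t ht => ?_) (fun t ht => ?_)
  · have hxt := (hx t).hasDerivAt
    rw [hode t ht, directSetField_one_eq_mul hs (hpos t ht)] at hxt
    exact (hxt.rpow_const_of_eq_mul (2 * α) (hpos t ht)).congr_deriv (by ring)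
  · have := hlow t ht
    gcongr
    exact (mul_pos (by positivity) (rpow_pos_of_pos (hpos t ht) _)).le

theorem tendsto_of_deriv_eq_directSetField_one {α η δ : ℝ} {x : ℝ → ℝ} (hα : 0 < α)
    (hη0 : 0 < η) (hη : η < 1 / 4) (hδ : ((1 - √(1 - 4 * η)) / 2) ^ (1 / (2 * α)) < δ)
    (hx : Differentiable ℝ x) (hx0 : x 0 = δ)
    (hode : ∀ t, 0 ≤ t → deriv x t = directSetField 1 α η (x t)) :
    Tendsto x atTop (𝓝 (((1 + √(1 - 4 * η)) / 2) ^ (1 / (2 * α)))) := by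
  set s := √(1 - 4 * η)
  have hs : s ^ 2 = 1 - 4 * η := sq_sqrt (by linarith)
  have hs0 : 0 < s := sqrt_pos.2 (by linarith)
  have hs1 : s < 1 := by nlinarith
  have hp : 0 < 2 * α := by positivity
  have hδ0 : 0 < δ := (rpow_pos_of_pos (by linarith) _).trans hδ
  rw [one_div] at hδ ⊢
  obtain ⟨w, hwm, hw⟩ : ∃ w, (1 - s) / 2 < w ∧ w < min (δ ^ (2 * α)) ((1 + s) / 2) :=
    exists_between (lt_min ((rpow_inv_lt_iff_of_pos (by linarith) hδ0.le hp).1 hδ) (by linarith))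
  have hw0 : 0 < w := by linarith
  set θ := w ^ (2 * α)⁻¹
  have hθ0 : 0 < θ := rpow_pos_of_pos hw0 _
  have hθ : θ ^ (2 * α) = w := rpow_inv_rpow hw0.le hp.ne'
  have hlow : ∀ t, 0 ≤ t → θ ≤ x t := fun t ht =>
    le_of_deriv_eq_directSetField_one hs hθ0 (hθ ▸ hwm) (hθ ▸ hw.trans_le (min_le_right _ _)) hx
      (hx0 ▸ (rpow_inv_le_iff_of_pos hw0.le hδ0.le hp).2 (hw.le.trans (min_le_left _ _))) hode ht
  have hpos : ∀ t, 0 ≤ t → 0 < x t := fun t ht => hθ0.trans_le (hlow t ht)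
  have hv := tendsto_rpow_of_deriv_eq_directSetField_one hα hs hw0 hwm hx hpos
    (fun t ht => hθ ▸ rpow_le_rpow hθ0.le (hlow t ht) hp.le) hode
  refine ((continuousAt_rpow_const _ _ (Or.inl (by linarith))).tendsto.comp hv).congr' ?_
  filter_upwards [eventually_ge_atTop 0] with t ht
  exact rpow_rpow_inv (hpos t ht).le hp.ne'

theorem directset_matrix_converges_to_projection_general
    (d : ℕ)
    (PS : Matrix (Fin d) (Fin d) ℝ)
    (PB : Matrix (Fin d) (Fin d) ℝ)
    (α σ2 η δ : ℝ) (hα : 0 < α) (hσ : 0 < σ2)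
    (hη1 : 1 / (4 * (1 + σ2)) < η) (hη2 : η < 1 / 4)
    (hδ : ((1 - Real.sqrt (1 - 4 * η)) / 2) ^ (1 / (2 * α)) < δ)
    (lamS lamB : ℝ → ℝ)
    (hdS : Differentiable ℝ lamS) (hdB : Differentiable ℝ lamB)
    (hS0 : lamS 0 = δ)
    (hodeS : ∀ t : ℝ, 0 ≤ t →
      deriv lamS t = lamS t * (-|lamS t| ^ (4 * α) + |lamS t| ^ (2 * α) - η))
    (hodeB : ∀ t : ℝ, 0 ≤ t →
      deriv lamB t =
        lamB t * (-(1 + σ2) * |lamB t| ^ (4 * α) + |lamB t| ^ (2 * α) - η)) :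
    Tendsto (fun t => lamS t • PS + lamB t • PB) atTop
      (nhds ((((1 + Real.sqrt (1 - 4 * η)) / 2) ^ (1 / (2 * α))) • PS)) := by
  have hη0 : 0 < η := lt_trans (by positivity) hη1
  have hS := tendsto_of_deriv_eq_directSetField_one hα hη0 hη2 hδ hdS hS0 fun t ht => by
    rw [hodeS t ht, directSetField, neg_one_mul]
  have hB := tendsto_zero_of_deriv_eq_directSetField (by positivity) hη1 hdB hodeB
  simpa using (hS.smul_const PS).add (hB.smul_const PB)

/-- Under DirectSet(α) gradient flow on a single-layer linear
network, with `P_S` the orthogonal projection onto the invariant subspace `S`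
(a symmetric idempotent matrix), `P_B = I − P_S`, weight decay
`η ∈ (1/(4(1+σ²)), 1/4)` and initialization `δ > ((1−√(1−4η))/2)^{1/(2α)}`,
the matrix trajectory `W(t) = λ_S(t) P_S + λ_B(t) P_B` converges to
`((1+√(1−4η))/2)^{1/(2α)} · P_S`. -/
theorem directset_matrix_converges_to_projection
    (d : ℕ) (hd : 1 ≤ d)
    (PS : Matrix (Fin d) (Fin d) ℝ) (hidem : PS * PS = PS) (hsymm : PSᵀ = PS)
    (PB : Matrix (Fin d) (Fin d) ℝ) (hPB : PB = 1 - PS)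
    (α σ2 η δ : ℝ) (hα : 0 < α) (hσ : 0 < σ2)
    (hη1 : 1 / (4 * (1 + σ2)) < η) (hη2 : η < 1 / 4)
    (hδ : ((1 - Real.sqrt (1 - 4 * η)) / 2) ^ (1 / (2 * α)) < δ)
    (lamS lamB : ℝ → ℝ)
    (hdS : Differentiable ℝ lamS) (hdB : Differentiable ℝ lamB)
    (hS0 : lamS 0 = δ) (hB0 : lamB 0 = δ)
    (hodeS : ∀ t : ℝ, 0 ≤ t →
      deriv lamS t = lamS t * (-|lamS t| ^ (4 * α) + |lamS t| ^ (2 * α) - η))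
    (hodeB : ∀ t : ℝ, 0 ≤ t →
      deriv lamB t =
        lamB t * (-(1 + σ2) * |lamB t| ^ (4 * α) + |lamB t| ^ (2 * α) - η)) :
    Tendsto (fun t => lamS t • PS + lamB t • PB) atTop
      (nhds ((((1 + Real.sqrt (1 - 4 * η)) / 2) ^ (1 / (2 * α))) • PS)) :=
  directset_matrix_converges_to_projection_general d PS PB α σ2 η δ hα hσ hη1 hη2 hδ lamS lamB hdS
    hdB hS0 hodeS hodeB
end

section
/- Let α > 0, σ² > 0, δ > 0, and let η > 1/(4·(1+σ²)^{1+2α}). Then every differentiable function λ_B : [0,∞) → ℝ with λ_B(0) = δ that satisfies λ_B'(t) = λ_B(t)·(−(1+σ²)^{1+2α}·|λ_B(t)|^{4α} + |λ_B(t)|^{2α} − η) for all t ≥ 0 converges to 0 as t → ∞. -/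
/-!
With `c = (1 + σ²)^{1+2α}` and `a = |λ|^{2α}`, the bracket of the ODE is `-c a² + a - η`, and
completing the square bounds it by `1/(4c) - η =: -k < 0`. Hence `λ λ' ≤ -k λ²`, so `λ² e^{2kt}`
is non-increasing on `[0, ∞)` and `|λ t| ≤ |λ 0| e^{-kt}`.
-/

open Filter Real Set

theorem neg_mul_sq_add_le_inv_four_mul {c : ℝ} (hc : 0 < c) (a : ℝ) :
    -c * a ^ 2 + a ≤ 1 / (4 * c) := by
  have hsq : 1 / (4 * c) - (-c * a ^ 2 + a) = (2 * c * a - 1) ^ 2 / (4 * c) := by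
    field_simp
    ring
  have hnonneg : 0 ≤ (2 * c * a - 1) ^ 2 / (4 * c) := by positivity
  linarith

section DecayOfDifferentialInequality

variable {f : ℝ → ℝ} {k : ℝ}

theorem hasDerivAt_sq_mul_exp (hf : Differentiable ℝ f) (t : ℝ) :
    HasDerivAt (fun s => f s ^ 2 * exp (2 * k * s))
      (2 * exp (2 * k * t) * (f t * deriv f t + k * f t ^ 2)) t := by
  have hexp : HasDerivAt (fun s => exp (2 * k * s)) (exp (2 * k * t) * (2 * k)) t := by
    simpa using ((hasDerivAt_id t).const_mul (2 * k)).exp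
  refine (((hf t).hasDerivAt.fun_pow 2).fun_mul hexp).congr_deriv ?_
  push_cast
  ring

theorem antitoneOn_sq_mul_exp_of_mul_deriv_le (hf : Differentiable ℝ f)
    (h : ∀ t, 0 ≤ t → f t * deriv f t ≤ -k * f t ^ 2) :
    AntitoneOn (fun t => f t ^ 2 * exp (2 * k * t)) (Ici 0) := by
  refine antitoneOn_of_deriv_nonpos (convex_Ici 0)
    (fun t _ => (hasDerivAt_sq_mul_exp hf t).continuousAt.continuousWithinAt)
    (fun t _ => (hasDerivAt_sq_mul_exp hf t).differentiableAt.differentiableWithinAt)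
    fun t ht => ?_
  rw [interior_Ici] at ht
  rw [(hasDerivAt_sq_mul_exp hf t).deriv]
  have hineq := h t ht.le
  exact mul_nonpos_of_nonneg_of_nonpos (by positivity) (by linarith)

theorem abs_le_mul_exp_of_mul_deriv_le (hf : Differentiable ℝ f)
    (h : ∀ t, 0 ≤ t → f t * deriv f t ≤ -k * f t ^ 2) {t : ℝ} (ht : 0 ≤ t) :
    |f t| ≤ |f 0| * exp (-(k * t)) := by
  have henergy : f t ^ 2 * exp (2 * k * t) ≤ f 0 ^ 2 := by
    simpa using antitoneOn_sq_mul_exp_of_mul_deriv_le hf h self_mem_Ici ht ht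
  have hexp : exp (-(k * t)) ^ 2 * exp (2 * k * t) = 1 := by
    rw [← exp_nat_mul, ← exp_add]
    norm_num
    ring_nf
  refine abs_le_of_sq_le_sq ?_ (by positivity)
  calc f t ^ 2 = f t ^ 2 * exp (2 * k * t) * exp (-(k * t)) ^ 2 := by
        rw [mul_assoc, mul_comm (exp _), hexp, mul_one]
    _ ≤ f 0 ^ 2 * exp (-(k * t)) ^ 2 := by gcongr
    _ = (|f 0| * exp (-(k * t))) ^ 2 := by rw [mul_pow, sq_abs]

theorem tendsto_zero_of_mul_deriv_le (hf : Differentiable ℝ f) (hk : 0 < k)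
    (h : ∀ t, 0 ≤ t → f t * deriv f t ≤ -k * f t ^ 2) :
    Tendsto f atTop (nhds 0) := by
  have hbound : Tendsto (fun t => |f 0| * exp (-(k * t))) atTop (nhds 0) := by
    simpa using (tendsto_exp_neg_atTop_nhds_zero.comp
      (tendsto_id.const_mul_atTop hk)).const_mul |f 0|
  refine squeeze_zero_norm' ?_ hbound
  filter_upwards [eventually_ge_atTop 0] with t ht
  exact abs_le_mul_exp_of_mul_deriv_le hf h ht

end DecayOfDifferentialInequality

theorem directset_variant_nuisance_eigen_to_zero_general
    (α σ2 η : ℝ) (hσ : 0 < σ2)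
    (hη : 1 / (4 * (1 + σ2) ^ (1 + 2 * α)) < η)
    (lamB : ℝ → ℝ) (hdiff : Differentiable ℝ lamB)
    (hode : ∀ t : ℝ, 0 ≤ t →
      deriv lamB t =
        lamB t * (-(1 + σ2) ^ (1 + 2 * α) * |lamB t| ^ (4 * α)
          + |lamB t| ^ (2 * α) - η)) :
    Tendsto lamB atTop (nhds 0) := by
  set c := (1 + σ2) ^ (1 + 2 * α)
  have hc : 0 < c := rpow_pos_of_pos (by linarith) _
  refine tendsto_zero_of_mul_deriv_le hdiff (k := η - 1 / (4 * c)) (by linarith) fun t ht => ?_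
  set a := |lamB t| ^ (2 * α)
  have ha : |lamB t| ^ (4 * α) = a ^ 2 := by
    rw [show 4 * α = 2 * α * 2 by ring, rpow_mul (abs_nonneg _), rpow_two]
  have hquad := neg_mul_sq_add_le_inv_four_mul hc a
  rw [hode t ht, ha]
  nlinarith [mul_le_mul_of_nonneg_left hquad (sq_nonneg (lamB t))]

/-- for the DirectSet(α) variant with predictor
`W_p = (W E[x₁x₁ᵀ] Wᵀ)^α`, the nuisance eigenvalue dynamics
`λ_B' = λ_B (−(1+σ²)^{1+2α}|λ_B|^{4α} + |λ_B|^{2α} − η)` with `λ_B(0) = δ > 0`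
converge to `0` as soon as `η > 1/(4(1+σ²)^{1+2α})`. -/
theorem directset_variant_nuisance_eigen_to_zero
    (α σ2 δ η : ℝ) (hα : 0 < α) (hσ : 0 < σ2) (hδ : 0 < δ)
    (hη : 1 / (4 * (1 + σ2) ^ (1 + 2 * α)) < η)
    (lamB : ℝ → ℝ) (hdiff : Differentiable ℝ lamB) (h0 : lamB 0 = δ)
    (hode : ∀ t : ℝ, 0 ≤ t →
      deriv lamB t =
        lamB t * (-(1 + σ2) ^ (1 + 2 * α) * |lamB t| ^ (4 * α)
          + |lamB t| ^ (2 * α) - η)) :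
    Tendsto lamB atTop (nhds 0) :=
  directset_variant_nuisance_eigen_to_zero_general α σ2 η hσ hη lamB hdiff hode
end
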